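/- arXiv:1304.6209 — 2 statements merged into one kernel-verified Lean document; each statement's English description precedes it below -/
import Mathlib

section
/- Let P and Q be n×n real orthogonal matrices, H = QᵀP − I, and let λ₁*, …, λₙ* be real numbers with Λ* = diag(λ₁*, …, λₙ*). Define vᵢ = 2λᵢ*Hᵢᵢ + Σⱼ₌₁ⁿ λⱼ*Hᵢⱼ² for i = 1, …, n. Then ‖v‖ ≤ 2·(max₁≤ᵢ≤ₙ |λᵢ*|)·‖H‖_F², where ‖v‖ is the Euclidean norm of v = (v₁, …, vₙ) and ‖H‖_F is the Frobenius norm of H. -/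
open scoped BigOperators
open Matrix

/-- Euclidean norm on ℝⁿ. -/
noncomputable def euclNorm {n : ℕ} (x : Fin n → ℝ) : ℝ := Real.sqrt (∑ i, x i ^ 2)

/-- Operator 2-norm of a real matrix. -/
noncomputable def opNorm {n : ℕ} (A : Matrix (Fin n) (Fin n) ℝ) : ℝ :=
  ‖Matrix.toEuclideanCLM (𝕜 := ℝ) A‖

/-- Frobenius norm of a real matrix. -/
noncomputable def frobNorm {n : ℕ} (A : Matrix (Fin n) (Fin n) ℝ) : ℝ :=
  Real.sqrt (∑ i, ∑ j, A i j ^ 2)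

/-! Writing `U = 1 + H` with `U` orthogonal, the `(i, i)` entry of `Uᵀ U = 1` reads
`2 Hᵢᵢ + ∑ⱼ Hⱼᵢ² = 0`. This turns `vᵢ` into `-λᵢ ∑ⱼ Hⱼᵢ² + ∑ⱼ λⱼ Hᵢⱼ²`, so
`|vᵢ| ≤ M (∑ⱼ Hⱼᵢ² + ∑ⱼ Hᵢⱼ²)` with `M = maxᵢ |λᵢ|`. Summing over `i` bounds
`‖v‖₂ ≤ ‖v‖₁` by `2 M ‖H‖_F²`. -/

theorem Matrix.transpose_mul_orthogonal {ι : Type*} [Fintype ι] [DecidableEq ι]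
    {P Q : Matrix ι ι ℝ} (hP : Pᵀ * P = 1) (hQ : Qᵀ * Q = 1) :
    (Qᵀ * P)ᵀ * (Qᵀ * P) = 1 := by
  have hQQ : Q * Qᵀ = 1 := mul_eq_one_comm.mp hQ
  rw [transpose_mul, transpose_transpose, Matrix.mul_assoc, ← Matrix.mul_assoc Q, hQQ,
    Matrix.one_mul, hP]

theorem Matrix.two_mul_sub_one_diag_eq_neg_sum_sq {ι : Type*} [Fintype ι] [DecidableEq ι]
    {U : Matrix ι ι ℝ} (hU : Uᵀ * U = 1) (i : ι) :
    2 * (U - 1) i i = -∑ j, (U - 1) j i ^ 2 := by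
  have hcol : ∑ j, U j i ^ 2 = 1 := by
    simpa [mul_apply, sq] using congr_fun₂ hU i i
  simp only [sub_apply, one_apply, sub_sq, Finset.sum_add_distrib, Finset.sum_sub_distrib, hcol,
    mul_ite, mul_one, mul_zero, Finset.sum_ite_eq', Finset.mem_univ, ↓reduceIte, ite_pow, one_pow,
    ne_eq, OfNat.ofNat_ne_zero, not_false_eq_true, zero_pow]
  ring

theorem abs_sum_mul_le_of_nonneg {ι : Type*} (s : Finset ι) {a x : ι → ℝ} {M : ℝ}
    (ha : ∀ j ∈ s, |a j| ≤ M) (hx : ∀ j ∈ s, 0 ≤ x j) :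
    |∑ j ∈ s, a j * x j| ≤ M * ∑ j ∈ s, x j := by
  calc |∑ j ∈ s, a j * x j| ≤ ∑ j ∈ s, |a j * x j| := Finset.abs_sum_le_sum_abs _ _
    _ ≤ ∑ j ∈ s, M * x j := Finset.sum_le_sum fun j hj => by
        rw [abs_mul, abs_of_nonneg (hx j hj)]
        exact mul_le_mul_of_nonneg_right (ha j hj) (hx j hj)
    _ = M * ∑ j ∈ s, x j := (Finset.mul_sum _ _ _).symm

theorem euclNorm_le_sum_abs {n : ℕ} (x : Fin n → ℝ) : euclNorm x ≤ ∑ i, |x i| := by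
  refine Real.sqrt_le_iff.mpr ⟨Finset.sum_nonneg fun i _ => abs_nonneg _, ?_⟩
  simpa only [sq_abs] using
    Finset.sum_sq_le_sq_sum_of_nonneg (s := Finset.univ) fun i _ => abs_nonneg (x i)

theorem frobNorm_sq {n : ℕ} (A : Matrix (Fin n) (Fin n) ℝ) :
    frobNorm A ^ 2 = ∑ i, ∑ j, A i j ^ 2 :=
  Real.sq_sqrt (Finset.sum_nonneg fun _ _ => Finset.sum_nonneg fun _ _ => sq_nonneg _)

theorem stmt_4_general {n : ℕ} (P Q : Matrix (Fin n) (Fin n) ℝ)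
    (hP : Pᵀ * P = 1) (hQ : Qᵀ * Q = 1)
    (H : Matrix (Fin n) (Fin n) ℝ) (hH : H = Qᵀ * P - 1)
    (lam : Fin n → ℝ) (v : Fin n → ℝ)
    (hv : ∀ i, v i = 2 * lam i * H i i + ∑ j, lam j * H i j ^ 2) :
    euclNorm v ≤ 2 * (⨆ i, |lam i|) * frobNorm H ^ 2 := by
  set M := ⨆ i, |lam i|
  have hM : ∀ j ∈ Finset.univ, |lam j| ≤ M := fun j _ =>
    le_ciSup (f := fun i => |lam i|) (Finite.bddAbove_range _) j
  have hdiag : ∀ i, 2 * H i i = -∑ j, H j i ^ 2 := by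
    subst hH
    exact two_mul_sub_one_diag_eq_neg_sum_sq (transpose_mul_orthogonal hP hQ)
  have hvi : ∀ i, |v i| ≤ M * ∑ j, H j i ^ 2 + M * ∑ j, H i j ^ 2 := fun i => by
    have hv' : v i = -(lam i * ∑ j, H j i ^ 2) + ∑ j, lam j * H i j ^ 2 := by
      rw [hv i, mul_comm 2, mul_assoc, hdiag i]; ring
    rw [hv']
    refine (abs_add_le _ _).trans (add_le_add ?_ ?_)
    · rw [abs_neg, abs_mul, abs_of_nonneg (Finset.sum_nonneg fun j _ => sq_nonneg (H j i))]
      exact mul_le_mul_of_nonneg_right (hM i (Finset.mem_univ i))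
        (Finset.sum_nonneg fun j _ => sq_nonneg _)
    · exact abs_sum_mul_le_of_nonneg _ hM fun j _ => sq_nonneg _
  calc euclNorm v ≤ ∑ i, |v i| := euclNorm_le_sum_abs v
    _ ≤ ∑ i, (M * ∑ j, H j i ^ 2 + M * ∑ j, H i j ^ 2) := Finset.sum_le_sum fun i _ => hvi i
    _ = 2 * M * frobNorm H ^ 2 := by
      rw [Finset.sum_add_distrib, ← Finset.mul_sum, ← Finset.mul_sum, Finset.sum_comm,
        frobNorm_sq]
      ring

theorem stmt_4 {n : ℕ} (hn : 0 < n) (P Q : Matrix (Fin n) (Fin n) ℝ)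
    (hP : Pᵀ * P = 1) (hQ : Qᵀ * Q = 1)
    (H : Matrix (Fin n) (Fin n) ℝ) (hH : H = Qᵀ * P - 1)
    (lam : Fin n → ℝ) (v : Fin n → ℝ)
    (hv : ∀ i, v i = 2 * lam i * H i i + ∑ j, lam j * H i j ^ 2) :
    euclNorm v ≤ 2 * (⨆ i, |lam i|) * frobNorm H ^ 2 :=
  stmt_4_general P Q hP hQ H hH lam v hv
end

section
/- Let f: ℝⁿ → ℝⁿ, c ∈ ℝⁿ, J ∈ ℝ^{n×n}, λ ∈ ℝⁿ, and suppose for some ε > 0 and δ > 0 that ‖f(c + d) − f(c) − Jd‖ ≤ ε‖d‖ for all d with ‖d‖ ≤ δ. Suppose further that d ∈ ℝⁿ satisfies ‖d‖ ≤ δ and ‖f(c) − λ + Jd‖ ≤ η‖f(c) − λ‖ for some η ∈ [0,1), and that ε‖d‖ ≤ (1 − ξ)(1 − η)‖f(c) − λ‖ for some ξ ∈ (0,1). Then ‖f(c + d) − λ‖ ≤ (1 − ξ(1 − η))‖f(c) − λ‖. -/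
open scoped BigOperators

/-- Euclidean norm on ℝⁿ. -/
noncomputable def euclidNorm {n : ℕ} (x : Fin n → ℝ) : ℝ := Real.sqrt (∑ i, x i ^ 2)

lemma euclidNorm_eq_norm_toLp {n : ℕ} (x : Fin n → ℝ) :
    euclidNorm x = ‖WithLp.toLp 2 x‖ := by
  simp only [euclidNorm, EuclideanSpace.norm_eq, Real.norm_eq_abs, sq_abs]

/-- Sufficient decrease of an inexact Newton step: `y` and `y'` are the values before and after
the step, `v` the linear model of the change and `t` the step length. -/
theorem norm_sub_le_of_inexact_newton {E : Type*} [SeminormedAddCommGroup E]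
    {y y' lam v : E} {ε t η ξ : ℝ}
    (hlin : ‖y' - y - v‖ ≤ ε * t) (hres : ‖y - lam + v‖ ≤ η * ‖y - lam‖)
    (hεt : ε * t ≤ (1 - ξ) * (1 - η) * ‖y - lam‖) :
    ‖y' - lam‖ ≤ (1 - ξ * (1 - η)) * ‖y - lam‖ :=
  calc ‖y' - lam‖ = ‖(y' - y - v) + (y - lam + v)‖ := by congr 1; abel
    _ ≤ ‖y' - y - v‖ + ‖y - lam + v‖ := norm_add_le _ _
    _ ≤ (1 - ξ * (1 - η)) * ‖y - lam‖ := by linarith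

theorem stmt_13_general {n : ℕ} (f : (Fin n → ℝ) → (Fin n → ℝ)) (c : Fin n → ℝ)
    (J : Matrix (Fin n) (Fin n) ℝ) (lam : Fin n → ℝ)
    (ε δ : ℝ)
    (hlin : ∀ d : Fin n → ℝ, euclidNorm d ≤ δ →
      euclidNorm (f (c + d) - f c - J.mulVec d) ≤ ε * euclidNorm d)
    (d : Fin n → ℝ) (hd : euclidNorm d ≤ δ)
    (η : ℝ)
    (hres : euclidNorm (f c - lam + J.mulVec d) ≤ η * euclidNorm (f c - lam))
    (ξ : ℝ)
    (hεd : ε * euclidNorm d ≤ (1 - ξ) * (1 - η) * euclidNorm (f c - lam)) :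
    euclidNorm (f (c + d) - lam) ≤ (1 - ξ * (1 - η)) * euclidNorm (f c - lam) := by
  have hstep := hlin d hd
  simp only [euclidNorm_eq_norm_toLp, WithLp.toLp_sub, WithLp.toLp_add] at hstep hres hεd ⊢
  exact norm_sub_le_of_inexact_newton hstep hres hεd

theorem stmt_13 {n : ℕ} (f : (Fin n → ℝ) → (Fin n → ℝ)) (c : Fin n → ℝ)
    (J : Matrix (Fin n) (Fin n) ℝ) (lam : Fin n → ℝ)
    (ε δ : ℝ) (hε : 0 < ε) (hδ : 0 < δ)
    (hlin : ∀ d : Fin n → ℝ, euclidNorm d ≤ δ →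
      euclidNorm (f (c + d) - f c - J.mulVec d) ≤ ε * euclidNorm d)
    (d : Fin n → ℝ) (hd : euclidNorm d ≤ δ)
    (η : ℝ) (hη : η ∈ Set.Ico (0 : ℝ) 1)
    (hres : euclidNorm (f c - lam + J.mulVec d) ≤ η * euclidNorm (f c - lam))
    (ξ : ℝ) (hξ : ξ ∈ Set.Ioo (0 : ℝ) 1)
    (hεd : ε * euclidNorm d ≤ (1 - ξ) * (1 - η) * euclidNorm (f c - lam)) :
    euclidNorm (f (c + d) - lam) ≤ (1 - ξ * (1 - η)) * euclidNorm (f c - lam) :=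
  stmt_13_general f c J lam ε δ hlin d hd η hres ξ hεd
end
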